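/- Let Γ be a group generated by a finite set S, and suppose there is a pseudo-norm ‖·‖ on Γ and a quasimorphism q : Γ → ℝ with |q(g)| ≤ ‖g‖ for all g, and whose homogenisation satisfies q̂(g) ≠ 0 for some g ∈ Γ. Then the translation length τ(g) := lim_{n→∞} |gⁿ|/n with respect to the word norm of S is positive. -/

import Mathlib

/-!
The bound `|q| ≤ N` together with subadditivity of `N` gives `|q h| ≤ C · |h|_S`, where `C`
bounds `N` on the generators and their inverses. Dividing by `n` along `h = gⁿ` and passing to
the limit yields `|q̂(g)| ≤ C · τ(g)`, so `τ(g) > 0` as soon as `q̂(g) ≠ 0`.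
-/

/-- The word norm of `g` with respect to a generating set `S`. -/
noncomputable def wordLength {G : Type*} [Group G] (S : Set G) (g : G) : ℕ :=
  sInf {k : ℕ | ∃ l : List G,
    l.length = k ∧ (∀ s ∈ l, s ∈ S ∨ s⁻¹ ∈ S) ∧ l.prod = g}

open Filter Topology

section WordLength

variable {G : Type*} [Group G] {S : Set G}

theorem exists_list_length_eq_wordLength {g : G}
    (hg : ∃ l : List G, (∀ s ∈ l, s ∈ S ∨ s⁻¹ ∈ S) ∧ l.prod = g) :
    ∃ l : List G, l.length = wordLength S g ∧ (∀ s ∈ l, s ∈ S ∨ s⁻¹ ∈ S) ∧ l.prod = g := by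
  obtain ⟨l, hlS, hlg⟩ := hg
  exact Nat.sInf_mem (s := {k | ∃ l : List G,
    l.length = k ∧ (∀ s ∈ l, s ∈ S ∨ s⁻¹ ∈ S) ∧ l.prod = g}) ⟨l.length, l, rfl, hlS, hlg⟩

variable {N : G → ℝ} {C : ℝ}

theorem le_mul_length_of_subadditive (hone : N 1 = 0) (hsub : ∀ g h : G, N (g * h) ≤ N g + N h)
    (hC : ∀ s, s ∈ S ∨ s⁻¹ ∈ S → N s ≤ C) :
    ∀ l : List G, (∀ s ∈ l, s ∈ S ∨ s⁻¹ ∈ S) → N l.prod ≤ C * l.length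
  | [], _ => by simp [hone]
  | s :: l, hl => by
    have hs : N s ≤ C := hC s (hl s List.mem_cons_self)
    have ih := le_mul_length_of_subadditive hone hsub hC l
      fun t ht => hl t (List.mem_cons_of_mem s ht)
    calc N (s :: l).prod ≤ N s + N l.prod := hsub s l.prod
      _ ≤ C * (s :: l).length := by push_cast [List.length_cons]; linarith

theorem le_mul_wordLength_of_subadditive (hone : N 1 = 0)
    (hsub : ∀ g h : G, N (g * h) ≤ N g + N h) (hC : ∀ s, s ∈ S ∨ s⁻¹ ∈ S → N s ≤ C) {g : G}
    (hg : ∃ l : List G, (∀ s ∈ l, s ∈ S ∨ s⁻¹ ∈ S) ∧ l.prod = g) :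
    N g ≤ C * wordLength S g := by
  obtain ⟨l, hlen, hlS, rfl⟩ := exists_list_length_eq_wordLength hg
  rw [← hlen]
  exact le_mul_length_of_subadditive hone hsub hC l hlS

end WordLength

theorem le_sum_abs_of_mem_or_inv_mem {G : Type*} [Group G] (S : Finset G) (N : G → ℝ) {s : G}
    (hs : s ∈ (S : Set G) ∨ s⁻¹ ∈ (S : Set G)) : N s ≤ ∑ t ∈ S, (|N t| + |N t⁻¹|) := by
  have hterm : ∀ t ∈ S, |N t| + |N t⁻¹| ≤ ∑ t ∈ S, (|N t| + |N t⁻¹|) := fun t ht =>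
    Finset.single_le_sum (f := fun t => |N t| + |N t⁻¹|) (fun _ _ => by positivity) ht
  rcases hs with hs | hs
  · linarith [le_abs_self (N s), abs_nonneg (N s⁻¹), hterm s hs]
  · have := hterm s⁻¹ hs
    rw [inv_inv] at this
    linarith [le_abs_self (N s), abs_nonneg (N s⁻¹)]

theorem pos_of_tendsto_div_of_abs_le_mul {a b : ℕ → ℝ} {α τ C : ℝ} (hC : 0 ≤ C)
    (hab : ∀ n, |a n| ≤ C * b n) (ha : Tendsto (fun n : ℕ => a n / n) atTop (𝓝 α)) (hα : α ≠ 0)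
    (hb : Tendsto (fun n : ℕ => b n / n) atTop (𝓝 τ)) : 0 < τ := by
  have hle : ∀ n : ℕ, |a n / n| ≤ C * (b n / n) := fun n => by
    rw [abs_div, Nat.abs_cast, ← mul_div_assoc]
    exact div_le_div_of_nonneg_right (hab n) n.cast_nonneg
  have hατ : |α| ≤ C * τ := le_of_tendsto_of_tendsto' ha.abs (hb.const_mul C) hle
  exact pos_of_mul_pos_right (lt_of_lt_of_le (abs_pos.mpr hα) hατ) hC

theorem undistorted_of_nonzero_homogenisation_general
    {Γ : Type*} [Group Γ] (S : Finset Γ)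
    (hgen : ∀ g : Γ, ∃ l : List Γ,
      (∀ s ∈ l, s ∈ (S : Set Γ) ∨ s⁻¹ ∈ (S : Set Γ)) ∧ l.prod = g)
    (N : Γ → ℝ)
    (hone : N 1 = 0)
    (hsub : ∀ g h : Γ, N (g * h) ≤ N g + N h)
    (q : Γ → ℝ)
    (hqN : ∀ g : Γ, |q g| ≤ N g)
    (g : Γ) (qhg : ℝ)
    (hlim : Filter.Tendsto (fun n : ℕ => q (g ^ n) / n) Filter.atTop (nhds qhg))
    (hne : qhg ≠ 0) :
    ∀ τ : ℝ,
      Filter.Tendsto (fun n : ℕ => (wordLength (S : Set Γ) (g ^ n) : ℝ) / n)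
        Filter.atTop (nhds τ) → 0 < τ := by
  intro τ hτ
  have hC : 0 ≤ ∑ s ∈ S, (|N s| + |N s⁻¹|) := Finset.sum_nonneg fun _ _ => by positivity
  refine pos_of_tendsto_div_of_abs_le_mul hC (fun n => ?_) hlim hne hτ
  exact (hqN _).trans <| le_mul_wordLength_of_subadditive hone hsub
    (fun _ => le_sum_abs_of_mem_or_inv_mem S N) (hgen _)

/-- Let `Γ` be a group generated by a finite set `S`, and suppose there is a
pseudo-norm `N` on `Γ` and a quasimorphism `q : Γ → ℝ` with `|q(g)| ≤ N g`
for all `g`, whose homogenisation `q̂` satisfies `q̂(g) ≠ 0` for some `g`.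
Then the translation length `τ(g) = lim_{n→∞} |gⁿ|/n` with respect to the
word norm of `S` is positive. -/
theorem undistorted_of_nonzero_homogenisation
    {Γ : Type*} [Group Γ] (S : Finset Γ)
    (hgen : ∀ g : Γ, ∃ l : List Γ,
      (∀ s ∈ l, s ∈ (S : Set Γ) ∨ s⁻¹ ∈ (S : Set Γ)) ∧ l.prod = g)
    (N : Γ → ℝ)
    (hone : N 1 = 0)
    (hinv : ∀ g : Γ, N g⁻¹ = N g)
    (hsub : ∀ g h : Γ, N (g * h) ≤ N g + N h)
    (q : Γ → ℝ) (D : ℝ)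
    (hq : ∀ g h : Γ, |q g - q (g * h) + q h| ≤ D)
    (hqN : ∀ g : Γ, |q g| ≤ N g)
    (g : Γ) (qhg : ℝ)
    (hlim : Filter.Tendsto (fun n : ℕ => q (g ^ n) / n) Filter.atTop (nhds qhg))
    (hne : qhg ≠ 0) :
    ∀ τ : ℝ,
      Filter.Tendsto (fun n : ℕ => (wordLength (S : Set Γ) (g ^ n) : ℝ) / n)
        Filter.atTop (nhds τ) → 0 < τ :=
  undistorted_of_nonzero_homogenisation_general S hgen N hone hsub q hqN g qhg hlim hne
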